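/- Let (X, d, 𝒱) be a weakly symmetric space that is Fréchet–Urysohn and such that for every injective sequence (x_n), x_n → x in 𝒯_{d,𝒱} if and only if (x_n) 𝒱-converges to x. Then for every x ∈ X, the family {⋂_{k=1}^n V_k^x ∣ n ∈ ℕ} is a neighborhood base at x. -/

import Mathlib

open Set Topology Filter

variable {X : Type*}

/-- A distance function: `d x y = 0 ↔ x = y` and symmetric. -/
def IsDistance (d : X → X → NNReal) : Prop :=
  (∀ x y, d x y = 0 ↔ x = y) ∧ (∀ x y, d x y = d y x)

/-- The ball of radius `ε` around `x` for the distance `d`. -/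
def dball (d : X → X → NNReal) (x : X) (ε : NNReal) : Set X := {y | d x y < ε}

/-- The intersection `⋂_{k=1}^n V_k^x` for a family `V`. -/
def cInter (V : X → ℕ → Set X) (x : X) (n : ℕ) : Set X := ⋂ k ∈ Finset.Icc 1 n, V x k

lemma cInter_anti (V : X → ℕ → Set X) (x : X) {m n : ℕ} (h : m ≤ n) :
    cInter V x n ⊆ cInter V x m := by
  intro y hy
  simp only [cInter, Set.mem_iInter] at *
  exact fun k hk => hy k (Finset.mem_Icc.mpr ⟨(Finset.mem_Icc.mp hk).1,
    le_trans (Finset.mem_Icc.mp hk).2 h⟩)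

/-- The family `V` is adapted to `d`: `x ∈ ⋂_{k=1}^n V_k^x ⊆ B(x, 2^{-n})`. -/
def Adapted (d : X → X → NNReal) (V : X → ℕ → Set X) : Prop :=
  ∀ x : X, ∀ n : ℕ, 1 ≤ n →
    x ∈ cInter V x n ∧ cInter V x n ⊆ dball d x ((1/2 : NNReal) ^ n)

/-- The topology `𝒯_{d,𝒱}`: `U` is open iff each `x ∈ U` has `⋂_{k=1}^n V_k^x ⊆ U` for some `n`. -/
def tDV (V : X → ℕ → Set X) : TopologicalSpace X where
  IsOpen U := ∀ x ∈ U, ∃ n : ℕ, cInter V x n ⊆ U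
  isOpen_univ := fun _ _ => ⟨0, subset_univ _⟩
  isOpen_inter := by
    intro U W hU hW x hx
    obtain ⟨n, hn⟩ := hU x hx.1
    obtain ⟨m, hm⟩ := hW x hx.2
    exact ⟨max n m, subset_inter ((cInter_anti V x (le_max_left n m)).trans hn)
      ((cInter_anti V x (le_max_right n m)).trans hm)⟩
  isOpen_sUnion := by
    intro S hS x hx
    obtain ⟨U, hU, hxU⟩ := hx
    obtain ⟨n, hn⟩ := hS U hU x hxU
    exact ⟨n, hn.trans (subset_sUnion_of_mem hU)⟩

/-- The topology `𝒯_d` induced by the distance `d`. -/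
def tD (d : X → X → NNReal) : TopologicalSpace X where
  IsOpen U := ∀ x ∈ U, ∃ ε : NNReal, 0 < ε ∧ dball d x ε ⊆ U
  isOpen_univ := fun _ _ => ⟨1, one_pos, subset_univ _⟩
  isOpen_inter := by
    intro U W hU hW x hx
    obtain ⟨ε, hε, hεU⟩ := hU x hx.1
    obtain ⟨δ, hδ, hδW⟩ := hW x hx.2
    refine ⟨min ε δ, lt_min hε hδ, subset_inter (fun y hy => hεU ?_) (fun y hy => hδW ?_)⟩
    · exact lt_of_lt_of_le (by simpa [dball] using hy) (min_le_left _ _)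
    · exact lt_of_lt_of_le (by simpa [dball] using hy) (min_le_right _ _)
  isOpen_sUnion := by
    intro S hS x hx
    obtain ⟨U, hU, hxU⟩ := hx
    obtain ⟨ε, hε, hn⟩ := hS U hU x hxU
    exact ⟨ε, hε, hn.trans (subset_sUnion_of_mem hU)⟩

/-- `𝒱`-convergence of a sequence to `x`. -/
def VConv (V : X → ℕ → Set X) (xs : ℕ → X) (x : X) : Prop :=
  ∀ m : ℕ, (Set.range xs \ cInter V x m).Finite

/-- The `𝒱`-closure of a set `A`. -/
def CV (V : X → ℕ → Set X) (A : Set X) : Set X :=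
  A ∪ {x | ∃ xs : ℕ → X, (∀ n, xs n ∈ A) ∧ (Set.range xs).Infinite ∧ VConv V xs x}

/-- The condition (WS-M) together with `closure = 𝒱`-closure: `(X, d, 𝒱)` is weakly semi-metric. -/
def IsWeaklySemiMetric (d : X → X → NNReal) (V : X → ℕ → Set X) : Prop :=
  IsDistance d ∧ Adapted d V ∧
  (∀ A : Set X, @closure X (tDV V) A = CV V A) ∧
  (∀ (xs : ℕ → X) (x : X), x ∈ ⋂ n, V (xs n) n →
    (⋂ n, V (xs n) n) = {x} ∧
    ∀ ys : ℕ → X, (∀ n, ys n ∈ ⋂ k ∈ Finset.Iic n, V (xs k) k) →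
      Filter.Tendsto ys Filter.atTop (@nhds X (tDV V) x))

section WithTop
variable [TopologicalSpace X]

/-- A sequence of open covers of `X`. -/
def IsOpenCoverSeq (G : ℕ → Set (Set X)) : Prop :=
  ∀ n, (∀ g ∈ G n, IsOpen g) ∧ ⋃₀ G n = Set.univ

/-- The star `St(x, 𝒢) = ⋃ {g ∈ 𝒢 ∣ x ∈ g}`. -/
def st (G : Set (Set X)) (x : X) : Set X := ⋃₀ {g ∈ G | x ∈ g}

/-- A weak development of `X`. -/
def IsWeakDevelopment (G : ℕ → Set (Set X)) : Prop :=
  IsOpenCoverSeq G ∧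
  ∀ (x : X) (g : ℕ → Set X), (∀ n, g n ∈ G n) → (∀ n, x ∈ g n) →
    (𝓝 x).HasBasis (fun _ : ℕ => True) (fun n => ⋂ i ∈ Finset.Iic n, g i)

/-- A weakly `G_δ^*`-diagonal sequence. -/
def IsWeaklyGDeltaStarSeq (G : ℕ → Set (Set X)) : Prop :=
  IsOpenCoverSeq G ∧
  ∀ (x : X) (g : ℕ → Set X), (∀ n, g n ∈ G n) → (∀ n, x ∈ g n) →
    (⋂ n, closure (⋂ k ∈ Finset.Iic n, g k)) = {x}

/-- A `G_δ^*`-diagonal sequence. -/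
def IsGDeltaStarSeq (G : ℕ → Set (Set X)) : Prop :=
  IsOpenCoverSeq G ∧ ∀ x : X, (⋂ n, closure (st (G n) x)) = {x}

/-- A `G_δ`-diagonal sequence. -/
def IsGDeltaDiagSeq (G : ℕ → Set (Set X)) : Prop :=
  IsOpenCoverSeq G ∧ ∀ x : X, (⋂ n, st (G n) x) = {x}

/-- A weakly `wΔ`-sequence. -/
def IsWeaklyWDeltaSeq (G : ℕ → Set (Set X)) : Prop :=
  IsOpenCoverSeq G ∧
  ∀ (x : X) (g : ℕ → Set X), (∀ n, g n ∈ G n) → (∀ n, x ∈ g n) →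
    ∀ xs : ℕ → X, (∀ n, xs n ∈ ⋂ k ∈ Finset.Iic n, g k) →
      ∃ y, MapClusterPt y Filter.atTop xs

end WithTop

/-!
Each `⋂_{k=1}^n V_k^x` is a neighbourhood of `x`. Otherwise `x` lies in the closure of its
complement, so by the Fréchet–Urysohn property some sequence from the complement converges to
`x`. Adaptedness to `d` makes the space `T₁`, so this sequence may be taken with infinite range;
it then `𝒱`-converges to `x`, hence eventually enters `⋂_{k=1}^n V_k^x`, which is absurd.
Conversely, every open set of `𝒯_{d,𝒱}` contains such an intersection by definition.
-/

theorem exists_seq_infinite_range_tendsto_of_mem_closure [TopologicalSpace X]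
    [FrechetUrysohnSpace X] [T1Space X] {s : Set X} {x : X} (hx : x ∈ closure s) (hxs : x ∉ s) :
    ∃ u : ℕ → X, (∀ n, u n ∈ s) ∧ (range u).Infinite ∧ Tendsto u atTop (𝓝 x) := by
  obtain ⟨u, hus, hux⟩ := mem_closure_iff_seq_limit.mp hx
  refine ⟨u, hus, fun hfin => ?_, hux⟩
  have hx_notMem : x ∉ range u := by
    rintro ⟨n, rfl⟩
    exact hxs (hus n)
  obtain ⟨n, hn⟩ := (hux.eventually_mem (hfin.isClosed.isOpen_compl.mem_nhds hx_notMem)).exists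
  exact hn (mem_range_self n)

section WeaklySymmetric

variable {d : X → X → NNReal} {V : X → ℕ → Set X}

theorem mem_cInter_self (hV : Adapted d V) (x : X) (n : ℕ) : x ∈ cInter V x n := by
  rcases Nat.eq_zero_or_pos n with rfl | hn
  · simp [cInter]
  · exact (hV x n hn).1

theorem exists_notMem_cInter (hd : IsDistance d) (hV : Adapted d V) {x y : X} (hxy : x ≠ y) :
    ∃ n, y ∉ cInter V x n := by
  have hdist : 0 < d x y := pos_iff_ne_zero.mpr fun h => hxy ((hd.1 x y).mp h)
  obtain ⟨n, hn⟩ := exists_pow_lt_of_lt_one hdist (by norm_num : (1 / 2 : NNReal) < 1)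
  refine ⟨n + 1, fun hy => ?_⟩
  have hball : d x y < (1 / 2 : NNReal) ^ (n + 1) := (hV x (n + 1) n.succ_pos).2 hy
  have hpow : (1 / 2 : NNReal) ^ (n + 1) ≤ (1 / 2) ^ n :=
    pow_le_pow_of_le_one (by norm_num) (by norm_num) n.le_succ
  exact (hball.trans_le hpow).not_gt hn

theorem t1Space_tDV (hd : IsDistance d) (hV : Adapted d V) : @T1Space X (tDV V) := by
  let _ : TopologicalSpace X := tDV V
  refine ⟨fun y => ⟨fun w (hwy : w ≠ y) => ?_⟩⟩
  obtain ⟨n, hn⟩ := exists_notMem_cInter hd hV hwy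
  exact ⟨n, fun z hz (hzy : z = y) => hn (hzy ▸ hz)⟩

theorem exists_cInter_subset_of_mem_nhds_tDV {x : X} {s : Set X}
    (hs : s ∈ @nhds X (tDV V) x) : ∃ n, cInter V x n ⊆ s := by
  let _ : TopologicalSpace X := tDV V
  obtain ⟨U, hUs, hU, hxU⟩ := mem_nhds_iff.mp hs
  exact (hU x hxU).imp fun _ hn => hn.trans hUs

theorem VConv.exists_mem_cInter {u : ℕ → X} {x : X} (h : VConv V u x) (hu : (range u).Infinite)
    (n : ℕ) : ∃ k, u k ∈ cInter V x n := by
  by_contra! hout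
  exact hu ((h n).subset fun _ ⟨k, hk⟩ => ⟨⟨k, hk⟩, hk ▸ hout k⟩)

end WeaklySymmetric

/-- in a Fréchet–Urysohn weakly symmetric space in which convergence of
injective sequences coincides with `𝒱`-convergence, `{⋂_{k=1}^n V_k^x}` is a neighborhood
base at every `x`. -/
theorem frechet_nbhdBase {X : Type*} (d : X → X → NNReal) (V : X → ℕ → Set X)
    (hd : IsDistance d) (hV : Adapted d V)
    (hfu : @FrechetUrysohnSpace X (tDV V))
    (hiff : ∀ (xs : ℕ → X) (x : X), (Set.range xs).Infinite →
      (Filter.Tendsto xs Filter.atTop (@nhds X (tDV V) x) ↔ VConv V xs x)) :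
    ∀ x : X, (@nhds X (tDV V) x).HasBasis (fun _ : ℕ => True) (cInter V x) := by
  intro x
  let _ : TopologicalSpace X := tDV V
  have _ : T1Space X := t1Space_tDV hd hV
  have hnhds : ∀ n, cInter V x n ∈ 𝓝 x := by
    intro n
    rw [← mem_interior_iff_mem_nhds, ← compl_compl (interior _), ← closure_compl]
    intro hx
    obtain ⟨u, hu, hinf, hux⟩ :=
      exists_seq_infinite_range_tendsto_of_mem_closure hx (not_not.mpr (mem_cInter_self hV x n))
    obtain ⟨k, hk⟩ := ((hiff u x hinf).mp hux).exists_mem_cInter hinf n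
    exact hu k hk
  refine ⟨fun s => ⟨fun hs => ?_, fun ⟨n, _, hn⟩ => mem_of_superset (hnhds n) hn⟩⟩
  exact (exists_cInter_subset_of_mem_nhds_tDV hs).imp fun _ hn => ⟨trivial, hn⟩
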